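/- arXiv:2605.06156 — 4 statements merged into one kernel-verified Lean document; each statement's English description precedes it below -/
import Mathlib

section
/- Let ρ be a probability measure on a measurable space and let h be a bounded measurable real-valued function. Define Z = ∫ e^h dρ (which satisfies 0 < Z < ∞) and let π_h be the probability measure with density e^h / Z with respect to ρ. Then for every probability measure π absolutely continuous with respect to ρ with KL(π‖ρ) < ∞, one has ∫ h dπ − KL(π ‖ ρ) ≤ log Z, with equality if and only if π = π_h. In particular π_h is the unique maximizer of the functional π ↦ ∫ h dπ − KL(π‖ρ) over such π. -/
/-!
Against the tilted measure `ρ.tilted h = (e^h / Z) • ρ` the log-likelihood ratio is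
`llr π (ρ.tilted h) = llr π ρ - h + log Z`, so the functional equals
`log Z - KL(π ‖ ρ.tilted h)`. Gibbs' inequality (`KL ≥ 0`, with equality only for equal
measures) then gives both the bound and its equality case.
-/

open MeasureTheory ProbabilityTheory InformationTheory

section Gibbs

variable {Ω : Type*} [MeasurableSpace Ω]

lemma integral_llr_nonneg {μ ν : Measure Ω} [IsProbabilityMeasure μ] [IsProbabilityMeasure ν]
    (hμν : μ ≪ ν) : 0 ≤ ∫ x, llr μ ν x ∂μ := by
  rw [← toReal_klDiv_of_measure_eq hμν (by simp)]
  exact ENNReal.toReal_nonneg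

lemma integral_llr_eq_zero_iff {μ ν : Measure Ω} [IsProbabilityMeasure μ]
    [IsProbabilityMeasure ν] (hμν : μ ≪ ν) (h_int : Integrable (llr μ ν) μ) :
    ∫ x, llr μ ν x ∂μ = 0 ↔ μ = ν := by
  rw [← toReal_klDiv_of_measure_eq hμν (by simp), ENNReal.toReal_eq_zero_iff,
    or_iff_left (klDiv_ne_top hμν h_int), klDiv_eq_zero_iff]

variable {π ρ : Measure Ω} {h : Ω → ℝ} [IsProbabilityMeasure π]

lemma integral_sub_integral_llr_eq_log_sub [SigmaFinite ρ] (hπρ : π ≪ ρ)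
    (hhπ : Integrable h π) (hhρ : Integrable (fun x ↦ Real.exp (h x)) ρ)
    (h_int : Integrable (llr π ρ) π) :
    ∫ x, h x ∂π - ∫ x, llr π ρ x ∂π
      = Real.log (∫ x, Real.exp (h x) ∂ρ) - ∫ x, llr π (ρ.tilted h) x ∂π := by
  rw [integral_llr_tilted_right hπρ hhπ hhρ h_int]
  ring

variable [SigmaFinite ρ] [NeZero ρ]

theorem integral_sub_integral_llr_le_log_integral_exp (hπρ : π ≪ ρ)
    (hhπ : Integrable h π) (hhρ : Integrable (fun x ↦ Real.exp (h x)) ρ)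
    (h_int : Integrable (llr π ρ) π) :
    ∫ x, h x ∂π - ∫ x, llr π ρ x ∂π ≤ Real.log (∫ x, Real.exp (h x) ∂ρ) := by
  have := isProbabilityMeasure_tilted hhρ
  rw [integral_sub_integral_llr_eq_log_sub hπρ hhπ hhρ h_int, sub_le_self_iff]
  exact integral_llr_nonneg (hπρ.trans (absolutelyContinuous_tilted hhρ))

theorem integral_sub_integral_llr_eq_log_integral_exp_iff (hπρ : π ≪ ρ)
    (hhπ : Integrable h π) (hhρ : Integrable (fun x ↦ Real.exp (h x)) ρ)
    (h_int : Integrable (llr π ρ) π) :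
    ∫ x, h x ∂π - ∫ x, llr π ρ x ∂π = Real.log (∫ x, Real.exp (h x) ∂ρ) ↔ π = ρ.tilted h := by
  have := isProbabilityMeasure_tilted hhρ
  rw [integral_sub_integral_llr_eq_log_sub hπρ hhπ hhρ h_int, sub_eq_self]
  exact integral_llr_eq_zero_iff (hπρ.trans (absolutelyContinuous_tilted hhρ))
    (integrable_llr_tilted_right hπρ hhπ h_int hhρ)

end Gibbs

/-- **Gibbs variational principle.**
Let `ρ` be a probability measure and `h` a bounded measurable function. With
`Z = ∫ e^h dρ` (which is positive) and `π_h` the probability measure with density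
`e^h/Z` w.r.t. `ρ`, for every probability measure `π ≪ ρ` with finite KL divergence
(encoded as integrability of the log-likelihood ratio `llr π ρ`, so that
`KL(π‖ρ) = ∫ llr π ρ dπ`), one has `∫ h dπ − KL(π‖ρ) ≤ log Z` with equality iff
`π = π_h`; in particular `π_h` is the unique maximizer. -/
theorem gibbs_variational_principle
    {Ω : Type*} [MeasurableSpace Ω] (ρ : Measure Ω) [IsProbabilityMeasure ρ]
    (h : Ω → ℝ) (hmeas : Measurable h) (M : ℝ) (hbd : ∀ x, |h x| ≤ M)
    (Z : ℝ) (hZdef : Z = ∫ x, Real.exp (h x) ∂ρ)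
    (πh : Measure Ω)
    (hπh : πh = ρ.withDensity (fun x => ENNReal.ofReal (Real.exp (h x) / Z))) :
    0 < Z ∧
    ∀ π : Measure Ω, IsProbabilityMeasure π → π ≪ ρ → Integrable (llr π ρ) π →
      ((∫ x, h x ∂π) - (∫ x, llr π ρ x ∂π) ≤ Real.log Z ∧
       ((∫ x, h x ∂π) - (∫ x, llr π ρ x ∂π) = Real.log Z ↔ π = πh)) := by
  have hhρ : Integrable (fun x ↦ Real.exp (h x)) ρ :=
    .of_bound hmeas.exp.aestronglyMeasurable (Real.exp M) <| ae_of_all _ fun x ↦ by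
      simpa [abs_of_pos (Real.exp_pos _)] using Real.exp_le_exp.2 (abs_le.1 (hbd x)).2
  obtain rfl : πh = ρ.tilted h := by rw [hπh, Measure.tilted, hZdef]
  subst hZdef
  refine ⟨integral_exp_pos hhρ, fun π _ hπρ h_int ↦ ?_⟩
  have hhπ : Integrable h π := .of_bound hmeas.aestronglyMeasurable M (ae_of_all _ hbd)
  exact ⟨integral_sub_integral_llr_le_log_integral_exp hπρ hhπ hhρ h_int,
    integral_sub_integral_llr_eq_log_integral_exp_iff hπρ hhπ hhρ h_int⟩
end

section
/- Let Ω ⊆ ℝ^d be a measurable set with finite positive Lebesgue measure, let λ ∈ (0,1) and η, β > 0, let Q : Ω → ℝ be bounded measurable, and let q, μ : Ω → ℝ be probability densities (with respect to Lebesgue measure on Ω) bounded above and below by positive constants. Define r(a) = μ(a)^λ · q(a)^{1−λ−1/η} · exp(Q(a)/β) and π_new(a) = r(a)/∫_Ω r, noting 0 < ∫_Ω r < ∞. Then the local fine-tuning objective J(π) = ∫_Ω π(a)[(1/β)Q(a) − (1/η)·log q(a)] da − (1−λ)·KL(π‖q) − λ·KL(π‖μ), defined for probability densities π on Ω (with values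 in [−∞, ∞), where the KL terms may be +∞), is uniquely maximized over all probability densities on Ω at π = π_new (uniqueness holding up to Lebesgue-almost-everywhere equality). -/
open MeasureTheory Classical

/-- `KL(p‖f) = ∫ p log(p/f) dν`, set to `+∞` when the integrand is not integrable. -/
noncomputable def klE {α : Type*} [MeasurableSpace α] (ν : Measure α)
    (p f : α → ℝ) : EReal :=
  if Integrable (fun a => p a * Real.log (p a / f a)) ν
  then ((∫ a, p a * Real.log (p a / f a) ∂ν : ℝ) : EReal)
  else ⊤

def IsProbDensity {α : Type*} [MeasurableSpace α] (ν : Measure α) (p : α → ℝ) : Prop :=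
  Measurable p ∧ (∀ᵐ a ∂ν, 0 ≤ p a) ∧ ∫ a, p a ∂ν = 1

/-- The local fine-tuning objective
`J(π) = ∫ π [(1/β)Q − (1/η) log q] − (1−λ)·KL(π‖q) − λ·KL(π‖μ)`,
with values in `[−∞, ∞)` (the KL terms may be `+∞`). -/
noncomputable def Jobj {α : Type*} [MeasurableSpace α] (ν : Measure α)
    (Q q μ : α → ℝ) (l η β : ℝ) (p : α → ℝ) : EReal :=
  ((∫ a, p a * ((1 / β) * Q a - (1 / η) * Real.log (q a)) ∂ν : ℝ) : EReal)
    - ((1 - l : ℝ) : EReal) * klE ν p q - ((l : ℝ) : EReal) * klE ν p μ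

/-!
Write `g = Q/β - (log q)/η` and `Z = ∫ r`, so that `log π_new = (1-λ) log q + λ log μ + g - log Z`.
Pointwise, `p log (p/π_new) = (1-λ) p log (p/q) + λ p log (p/μ) - p g + p log Z`, hence
`J(p) = log Z - KL(p‖π_new)` whenever both KL terms of `J(p)` are finite, and `J(p) = -∞`
otherwise. Gibbs' inequality `KL(p‖π_new) ≥ 0`, with equality only for `p = π_new` a.e., finishes
the proof; it follows from `x log (x/y) - (x - y) = y · klFun (x/y) ≥ 0`. Since `Q`, `log q`,
`log μ` and hence `log π_new` are essentially bounded, all the integrals involved are finite.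
-/

open Real Set InformationTheory
open scoped ENNReal

lemma mul_log_div_eq_mul_sub_log (x : ℝ) {y : ℝ} (hy : y ≠ 0) :
    x * log (x / y) = x * (log x - log y) := by
  rcases eq_or_ne x 0 with rfl | hx
  · simp
  · rw [log_div hx hy]

lemma mul_log_div_sub_eq_mul_klFun (x : ℝ) {y : ℝ} (hy : y ≠ 0) :
    x * log (x / y) - (x - y) = y * klFun (x / y) := by
  rw [klFun_apply]
  field_simp
  ring

lemma rpow_mul_rpow_mul_exp_eq_exp {x y : ℝ} (hx : 0 < x) (hy : 0 < y) (l e t : ℝ) :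
    x ^ l * y ^ e * exp t = exp (l * log x + e * log y + t) := by
  rw [rpow_def_of_pos hx, rpow_def_of_pos hy, ← exp_add, ← exp_add]
  ring_nf

lemma mul_log_div_self (x : ℝ) : x * log (x / x) = 0 := by
  rcases eq_or_ne x 0 with rfl | hx
  · simp
  · rw [div_self hx, log_one, mul_zero]

section Gibbs

variable {α : Type*} [MeasurableSpace α] {ν : Measure α} {p f : α → ℝ}

lemma IsProbDensity.integrable (hp : IsProbDensity ν p) : Integrable p ν :=
  of_not_not fun h => one_ne_zero (hp.2.2.symm.trans (integral_undef h))

lemma integral_mul_klFun_eq_integral_mul_log_div (hp : IsProbDensity ν p)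
    (hf : IsProbDensity ν f) (hf0 : ∀ᵐ a ∂ν, f a ≠ 0)
    (hint : Integrable (fun a => p a * log (p a / f a)) ν) :
    Integrable (fun a => f a * klFun (p a / f a)) ν ∧
      ∫ a, f a * klFun (p a / f a) ∂ν = ∫ a, p a * log (p a / f a) ∂ν := by
  have hae : (fun a => p a * log (p a / f a) - (p a - f a)) =ᵐ[ν]
      fun a => f a * klFun (p a / f a) :=
    hf0.mono fun a ha => mul_log_div_sub_eq_mul_klFun (p a) ha
  have hsub : Integrable (fun a => p a - f a) ν := hp.integrable.sub hf.integrable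
  refine ⟨(hint.sub hsub).congr hae, ?_⟩
  rw [← integral_congr_ae hae, integral_sub hint hsub, integral_sub hp.integrable hf.integrable,
    hp.2.2, hf.2.2, sub_self, sub_zero]

lemma ae_nonneg_mul_klFun_div (hp : IsProbDensity ν p) (hf0 : ∀ᵐ a ∂ν, 0 < f a) :
    0 ≤ᵐ[ν] fun a => f a * klFun (p a / f a) := by
  filter_upwards [hp.2.1, hf0] with a hpa hfa
  exact mul_nonneg hfa.le (klFun_nonneg (div_nonneg hpa hfa.le))

lemma integral_mul_log_div_nonneg (hp : IsProbDensity ν p) (hf : IsProbDensity ν f)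
    (hf0 : ∀ᵐ a ∂ν, 0 < f a) : 0 ≤ ∫ a, p a * log (p a / f a) ∂ν := by
  by_cases hint : Integrable (fun a => p a * log (p a / f a)) ν
  · rw [← (integral_mul_klFun_eq_integral_mul_log_div hp hf (hf0.mono fun _ h => h.ne') hint).2]
    exact integral_nonneg_of_ae (ae_nonneg_mul_klFun_div hp hf0)
  · rw [integral_undef hint]

lemma ae_eq_of_integral_mul_log_div_eq_zero (hp : IsProbDensity ν p) (hf : IsProbDensity ν f)
    (hf0 : ∀ᵐ a ∂ν, 0 < f a) (hint : Integrable (fun a => p a * log (p a / f a)) ν)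
    (hzero : ∫ a, p a * log (p a / f a) ∂ν = 0) : p =ᵐ[ν] f := by
  obtain ⟨hkl, hkl_eq⟩ :=
    integral_mul_klFun_eq_integral_mul_log_div hp hf (hf0.mono fun _ h => h.ne') hint
  have hzero_ae := (integral_eq_zero_iff_of_nonneg_ae (ae_nonneg_mul_klFun_div hp hf0) hkl).1
    (hkl_eq.trans hzero)
  filter_upwards [hzero_ae, hp.2.1, hf0] with a ha hpa hfa
  have hkl0 : klFun (p a / f a) = 0 := (mul_eq_zero.1 ha).resolve_left hfa.ne'
  exact (div_eq_one_iff_eq hfa.ne').1 ((klFun_eq_zero_iff (div_nonneg hpa hfa.le)).1 hkl0)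

lemma le_and_ae_eq_of_eq_sub_integral_mul_log_div {ρ : α → ℝ} {s : ℝ} {x : EReal}
    (hp : IsProbDensity ν p) (hρ : IsProbDensity ν ρ) (hρ0 : ∀ᵐ a ∂ν, 0 < ρ a)
    (hx : x = ⊥ ∨ Integrable (fun a => p a * log (p a / ρ a)) ν ∧
      x = ((s - ∫ a, p a * log (p a / ρ a) ∂ν : ℝ) : EReal)) :
    x ≤ s ∧ (x = s → p =ᵐ[ν] ρ) := by
  rcases hx with rfl | ⟨hint, rfl⟩
  · exact ⟨bot_le, fun h => absurd h (EReal.bot_ne_coe s)⟩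
  · rw [EReal.coe_le_coe_iff, EReal.coe_eq_coe_iff]
    exact ⟨by linarith [integral_mul_log_div_nonneg hp hρ hρ0],
      fun h => ae_eq_of_integral_mul_log_div_eq_zero hp hρ hρ0 hint (by linarith)⟩

end Gibbs

section Bounded

variable {α : Type*} [MeasurableSpace α] {ν : Measure α}

lemma memLp_top_log_of_bounds {f : α → ℝ} {c C : ℝ} (hf : Measurable f) (hc : 0 < c)
    (hfC : ∀ᵐ a ∂ν, c ≤ f a ∧ f a ≤ C) : MemLp (fun a => log (f a)) ∞ ν :=
  memLp_top_of_bound (measurable_log.comp hf).aestronglyMeasurable (max |log c| |log C|)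
    (hfC.mono fun _ ha => abs_le_max_abs_abs (log_le_log hc ha.1)
      (log_le_log (hc.trans_le ha.1) ha.2))

lemma integrable_exp_of_memLp_top [IsFiniteMeasure ν] {h : α → ℝ} (hh : MemLp h ∞ ν) :
    Integrable (fun a => exp (h a)) ν :=
  (memLp_top_of_bound (continuous_exp.comp_aestronglyMeasurable hh.1) (exp (lpNorm h ∞ ν))
    ((ae_le_lpNorm_exponent_top hh).mono fun _ ha => by
      rw [norm_of_nonneg (exp_pos _).le]
      exact exp_le_exp.2 ((le_abs_self _).trans ha))).integrable le_top

lemma integrable_mul_log_div_of_memLp_top {p f : α → ℝ} (hp : Integrable p ν)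
    (hlogp : MemLp (fun a => log (p a)) ∞ ν) (hlogf : MemLp (fun a => log (f a)) ∞ ν)
    (hf0 : ∀ᵐ a ∂ν, f a ≠ 0) : Integrable (fun a => p a * log (p a / f a)) ν :=
  (hp.mul_of_top_left (hlogp.sub hlogf)).congr
    (hf0.mono fun a ha => (mul_log_div_eq_mul_sub_log (p a) ha).symm)

lemma isProbDensity_div_integral_of_ae_eq_exp [IsFiniteMeasure ν] [NeZero ν] {r h ρ : α → ℝ}
    (hr : Measurable r) (hh : MemLp h ∞ ν) (hrh : r =ᵐ[ν] fun a => exp (h a))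
    (hρ : ∀ a, ρ a = r a / ∫ a, r a ∂ν) :
    Integrable r ν ∧ 0 < ∫ a, r a ∂ν ∧ IsProbDensity ν ρ ∧
      ∀ᵐ a ∂ν, 0 < ρ a ∧ log (ρ a) = h a - log (∫ a, r a ∂ν) := by
  obtain rfl : ρ = _ := funext hρ
  have hZ : 0 < ∫ a, r a ∂ν := by
    rw [integral_congr_ae hrh]
    exact integral_exp_pos (integrable_exp_of_memLp_top hh)
  have hpos : ∀ᵐ a ∂ν, 0 < r a / ∫ a, r a ∂ν ∧
      log (r a / ∫ a, r a ∂ν) = h a - log (∫ a, r a ∂ν) :=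
    hrh.mono fun a ha => by
      rw [ha, log_div (exp_pos _).ne' hZ.ne', log_exp]
      exact ⟨div_pos (exp_pos _) hZ, rfl⟩
  refine ⟨(integrable_exp_of_memLp_top hh).congr hrh.symm, hZ,
    ⟨hr.div_const _, hpos.mono fun _ ha => ha.1.le, ?_⟩, hpos⟩
  rw [integral_div, div_self hZ.ne']

end Bounded

section Objective

variable {α : Type*} [MeasurableSpace α] {ν : Measure α} {Q q μ p ρ : α → ℝ} {l η β s : ℝ}

lemma Jobj_eq_bot (hl : l ∈ Ioo (0 : ℝ) 1)
    (hkl : ¬(Integrable (fun a => p a * log (p a / q a)) ν ∧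
      Integrable (fun a => p a * log (p a / μ a)) ν)) :
    Jobj ν Q q μ l η β p = ⊥ := by
  unfold Jobj klE
  rcases not_and_or.1 hkl with hq | hμ
  · rw [if_neg hq, EReal.coe_mul_top_of_pos (sub_pos.2 hl.2), EReal.sub_top, EReal.bot_sub]
  · rw [if_neg hμ, EReal.coe_mul_top_of_pos hl.1, EReal.sub_top]

lemma integral_mul_log_div_eq_of_log_eq {g : α → ℝ} (hp : IsProbDensity ν p)
    (hpq : Integrable (fun a => p a * log (p a / q a)) ν)
    (hpμ : Integrable (fun a => p a * log (p a / μ a)) ν)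
    (hpg : Integrable (fun a => p a * g a) ν)
    (hρ : ∀ᵐ a ∂ν, q a ≠ 0 ∧ μ a ≠ 0 ∧ ρ a ≠ 0 ∧
      log (ρ a) = (1 - l) * log (q a) + l * log (μ a) + g a - s) :
    Integrable (fun a => p a * log (p a / ρ a)) ν ∧
      ∫ a, p a * log (p a / ρ a) ∂ν = (1 - l) * ∫ a, p a * log (p a / q a) ∂ν
        + l * ∫ a, p a * log (p a / μ a) ∂ν - ∫ a, p a * g a ∂ν + s := by
  have hae : (fun a => p a * log (p a / ρ a)) =ᵐ[ν] fun a => (1 - l) * (p a * log (p a / q a))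
      + l * (p a * log (p a / μ a)) - p a * g a + p a * s := by
    filter_upwards [hρ] with a ⟨hq, hμ, hρ, hlog⟩
    rw [mul_log_div_eq_mul_sub_log _ hρ, mul_log_div_eq_mul_sub_log _ hq,
      mul_log_div_eq_mul_sub_log _ hμ, hlog]
    ring
  have hkl : Integrable (fun a => (1 - l) * (p a * log (p a / q a))
      + l * (p a * log (p a / μ a))) ν := (hpq.const_mul _).add (hpμ.const_mul _)
  have hsum : Integrable (fun a => (1 - l) * (p a * log (p a / q a))
      + l * (p a * log (p a / μ a)) - p a * g a) ν := hkl.sub hpg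
  refine ⟨(hsum.add (hp.integrable.mul_const s)).congr hae.symm, ?_⟩
  rw [integral_congr_ae hae, integral_add hsum (hp.integrable.mul_const s), integral_sub hkl hpg,
    integral_add (hpq.const_mul _) (hpμ.const_mul _), integral_const_mul, integral_const_mul,
    integral_mul_const, hp.2.2, one_mul]

lemma Jobj_eq_sub_integral_mul_log_div (hp : IsProbDensity ν p)
    (hpq : Integrable (fun a => p a * log (p a / q a)) ν)
    (hpμ : Integrable (fun a => p a * log (p a / μ a)) ν)
    (hpg : Integrable (fun a => p a * ((1 / β) * Q a - (1 / η) * log (q a))) ν)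
    (hρ : ∀ᵐ a ∂ν, q a ≠ 0 ∧ μ a ≠ 0 ∧ ρ a ≠ 0 ∧ log (ρ a) =
      (1 - l) * log (q a) + l * log (μ a) + ((1 / β) * Q a - (1 / η) * log (q a)) - s) :
    Integrable (fun a => p a * log (p a / ρ a)) ν ∧
      Jobj ν Q q μ l η β p = ((s - ∫ a, p a * log (p a / ρ a) ∂ν : ℝ) : EReal) := by
  obtain ⟨hint, heq⟩ := integral_mul_log_div_eq_of_log_eq hp hpq hpμ hpg hρ
  refine ⟨hint, ?_⟩
  unfold Jobj klE
  rw [if_pos hpq, if_pos hpμ, heq, ← EReal.coe_mul, ← EReal.coe_mul, ← EReal.coe_sub,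
    ← EReal.coe_sub]
  congr 1
  ring

lemma Jobj_le_and_ae_eq_of_log_eq (hl : l ∈ Ioo (0 : ℝ) 1) (hρ : IsProbDensity ν ρ)
    (hlogq : MemLp (fun a => log (q a)) ∞ ν) (hlogμ : MemLp (fun a => log (μ a)) ∞ ν)
    (hQ : MemLp Q ∞ ν)
    (hρ_log : ∀ᵐ a ∂ν, q a ≠ 0 ∧ μ a ≠ 0 ∧ ρ a ≠ 0 ∧ log (ρ a) =
      (1 - l) * log (q a) + l * log (μ a) + ((1 / β) * Q a - (1 / η) * log (q a)) - s)
    (hp : IsProbDensity ν p) :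
    Jobj ν Q q μ l η β p ≤ Jobj ν Q q μ l η β ρ ∧
      (Jobj ν Q q μ l η β p = Jobj ν Q q μ l η β ρ → p =ᵐ[ν] ρ) := by
  have hg : MemLp (fun a => (1 / β) * Q a - (1 / η) * log (q a)) ∞ ν :=
    (hQ.const_mul _).sub (hlogq.const_mul _)
  have hρ_pos : ∀ᵐ a ∂ν, 0 < ρ a := by
    filter_upwards [hρ.2.1, hρ_log] with a h0 h
    exact h0.lt_of_ne' h.2.2.1
  have hlogρ : MemLp (fun a => log (ρ a)) ∞ ν :=
    ((((hlogq.const_mul _).add (hlogμ.const_mul _)).add hg).sub (memLp_top_const s)).ae_eq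
      (hρ_log.mono fun _ h => h.2.2.2.symm)
  have hJρ : Jobj ν Q q μ l η β ρ = s := by
    rw [(Jobj_eq_sub_integral_mul_log_div hρ
      (integrable_mul_log_div_of_memLp_top hρ.integrable hlogρ hlogq (hρ_log.mono fun _ h => h.1))
      (integrable_mul_log_div_of_memLp_top hρ.integrable hlogρ hlogμ
        (hρ_log.mono fun _ h => h.2.1))
      (hρ.integrable.mul_of_top_left hg) hρ_log).2]
    simp only [mul_log_div_self, integral_zero, sub_zero]
  rw [hJρ]
  refine le_and_ae_eq_of_eq_sub_integral_mul_log_div hp hρ hρ_pos ?_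
  by_cases hkl : Integrable (fun a => p a * log (p a / q a)) ν ∧
      Integrable (fun a => p a * log (p a / μ a)) ν
  · exact Or.inr (Jobj_eq_sub_integral_mul_log_div hp hkl.1 hkl.2
      (hp.integrable.mul_of_top_left hg) hρ_log)
  · exact Or.inl (Jobj_eq_bot hl hkl)

end Objective

theorem mirror_descent_update_closed_form_general
    {d : ℕ} (Ω : Set (EuclideanSpace ℝ (Fin d))) (hΩ : MeasurableSet Ω)
    (hΩpos : 0 < volume Ω) (hΩfin : volume Ω < ⊤)
    (l η β : ℝ) (hl : l ∈ Set.Ioo (0 : ℝ) 1)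
    (Q : EuclideanSpace ℝ (Fin d) → ℝ) (hQm : Measurable Q)
    (MQ : ℝ) (hQbd : ∀ a ∈ Ω, |Q a| ≤ MQ)
    (q μ : EuclideanSpace ℝ (Fin d) → ℝ)
    (hq : IsProbDensity (volume.restrict Ω) q)
    (hμ : IsProbDensity (volume.restrict Ω) μ)
    (c C : ℝ) (hc : 0 < c)
    (hqbd : ∀ a ∈ Ω, c ≤ q a ∧ q a ≤ C) (hμbd : ∀ a ∈ Ω, c ≤ μ a ∧ μ a ≤ C)
    (r : EuclideanSpace ℝ (Fin d) → ℝ)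
    (hr : ∀ a, r a = μ a ^ l * q a ^ (1 - l - 1 / η) * Real.exp (Q a / β))
    (πnew : EuclideanSpace ℝ (Fin d) → ℝ)
    (hπnew : ∀ a, πnew a = r a / ∫ a, r a ∂(volume.restrict Ω)) :
    Integrable r (volume.restrict Ω) ∧
    0 < ∫ a, r a ∂(volume.restrict Ω) ∧
    IsProbDensity (volume.restrict Ω) πnew ∧
    ∀ p : EuclideanSpace ℝ (Fin d) → ℝ, IsProbDensity (volume.restrict Ω) p →
      (Jobj (volume.restrict Ω) Q q μ l η β p
          ≤ Jobj (volume.restrict Ω) Q q μ l η β πnew ∧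
       (Jobj (volume.restrict Ω) Q q μ l η β p
          = Jobj (volume.restrict Ω) Q q μ l η β πnew →
        p =ᵐ[volume.restrict Ω] πnew)) := by
  set ν := volume.restrict Ω
  have : IsFiniteMeasure ν := isFiniteMeasure_restrict.2 hΩfin.ne
  have : NeZero ν := ⟨by simpa [ν, Measure.restrict_eq_zero] using hΩpos.ne'⟩
  have hΩae : ∀ᵐ a ∂ν, a ∈ Ω := ae_restrict_mem hΩ
  have hlogq := memLp_top_log_of_bounds hq.1 hc (hΩae.mono hqbd)
  have hlogμ := memLp_top_log_of_bounds hμ.1 hc (hΩae.mono hμbd)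
  have hQ : MemLp Q ∞ ν := memLp_top_of_bound hQm.aestronglyMeasurable MQ (hΩae.mono hQbd)
  set e := 1 - l - 1 / η
  have hh : MemLp (fun a => l * log (μ a) + e * log (q a) + Q a / β) ∞ ν :=
    ((hlogμ.const_mul l).add (hlogq.const_mul e)).add (hQ.mul_const β⁻¹)
  obtain ⟨hr_int, hZ, hπ, hlogπ⟩ := isProbDensity_div_integral_of_ae_eq_exp
    (funext hr ▸ ((hμ.1.pow_const l).mul (hq.1.pow_const e)).mul (hQm.div_const β).exp) hh
    (hΩae.mono fun a ha => (hr a).trans (rpow_mul_rpow_mul_exp_eq_exp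
      (hc.trans_le (hμbd a ha).1) (hc.trans_le (hqbd a ha).1) _ _ _)) hπnew
  have hπ_log : ∀ᵐ a ∂ν, q a ≠ 0 ∧ μ a ≠ 0 ∧ πnew a ≠ 0 ∧ log (πnew a) = (1 - l) * log (q a)
      + l * log (μ a) + ((1 / β) * Q a - (1 / η) * log (q a)) - log (∫ a, r a ∂ν) := by
    filter_upwards [hΩae, hlogπ] with a ha ⟨hpos, hlog⟩
    refine ⟨(hc.trans_le (hqbd a ha).1).ne', (hc.trans_le (hμbd a ha).1).ne', hpos.ne', ?_⟩
    rw [hlog]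
    ring
  exact ⟨hr_int, hZ, hπ, fun p hp => Jobj_le_and_ae_eq_of_log_eq hl hπ hlogq hlogμ hQ hπ_log hp⟩

/-- **Closed form of a single Mirror Descent update.**
On a set `Ω ⊆ ℝ^d` of finite positive Lebesgue measure, with `λ ∈ (0,1)`, `η, β > 0`,
bounded measurable `Q`, and probability densities `q, μ` bounded above and below by
positive constants, the objective `J` is uniquely maximized over all probability
densities at `π_new = r/∫r` where `r = μ^λ · q^{1−λ−1/η} · exp(Q/β)`. -/
theorem mirror_descent_update_closed_form
    {d : ℕ} (Ω : Set (EuclideanSpace ℝ (Fin d))) (hΩ : MeasurableSet Ω)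
    (hΩpos : 0 < volume Ω) (hΩfin : volume Ω < ⊤)
    (l η β : ℝ) (hl : l ∈ Set.Ioo (0 : ℝ) 1) (hη : 0 < η) (hβ : 0 < β)
    (Q : EuclideanSpace ℝ (Fin d) → ℝ) (hQm : Measurable Q)
    (MQ : ℝ) (hQbd : ∀ a ∈ Ω, |Q a| ≤ MQ)
    (q μ : EuclideanSpace ℝ (Fin d) → ℝ)
    (hq : IsProbDensity (volume.restrict Ω) q)
    (hμ : IsProbDensity (volume.restrict Ω) μ)
    (c C : ℝ) (hc : 0 < c)
    (hqbd : ∀ a ∈ Ω, c ≤ q a ∧ q a ≤ C) (hμbd : ∀ a ∈ Ω, c ≤ μ a ∧ μ a ≤ C)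
    (r : EuclideanSpace ℝ (Fin d) → ℝ)
    (hr : ∀ a, r a = μ a ^ l * q a ^ (1 - l - 1 / η) * Real.exp (Q a / β))
    (πnew : EuclideanSpace ℝ (Fin d) → ℝ)
    (hπnew : ∀ a, πnew a = r a / ∫ a, r a ∂(volume.restrict Ω)) :
    Integrable r (volume.restrict Ω) ∧
    0 < ∫ a, r a ∂(volume.restrict Ω) ∧
    IsProbDensity (volume.restrict Ω) πnew ∧
    ∀ p : EuclideanSpace ℝ (Fin d) → ℝ, IsProbDensity (volume.restrict Ω) p →
      (Jobj (volume.restrict Ω) Q q μ l η β p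
          ≤ Jobj (volume.restrict Ω) Q q μ l η β πnew ∧
       (Jobj (volume.restrict Ω) Q q μ l η β p
          = Jobj (volume.restrict Ω) Q q μ l η β πnew →
        p =ᵐ[volume.restrict Ω] πnew)) :=
  mirror_descent_update_closed_form_general Ω hΩ hΩpos hΩfin l η β hl Q hQm MQ hQbd q μ hq hμ c C hc
    hqbd hμbd r hr πnew hπnew
end

section
/- Let Ω ⊆ ℝ^d be a measurable set equipped with Lebesgue measure, let λ ∈ (0,1) and η, β > 0, let Q : Ω → ℝ be measurable, and let μ : Ω → ℝ be a strictly positive probability density on Ω. Define δ = λη/(1+λη) ∈ (0,1) and κ = β(1+λη)/η > 0. Suppose q : Ω → ℝ is a strictly positive probability density satisfying, for some constant ν ∈ ℝ, the stationarity condition (1/β)Q(a) − (1/η)·log q(a) − log q(a) − 1 + (1−λ)·log q(a) + λ·log μ(a) − ν = 0 for Lebesgue-almost-every a ∈ Ω. Then Z := ∫_Ω μ(a)^δ · exp(Q(a)/κ) da is finite and positive, q(a) = (1/Z)·μ(a)^δ·exp(Q(a)/κ) for almost every a ∈ Ω, and moreover Z = exp((1+ν)η/(1+λη)); consequently any two strictly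 positive probability densities satisfying such a stationarity condition (for possibly different constants ν) coincide almost everywhere. -/
/-!
Collecting the three `log q` terms of the stationarity condition gives the coefficient
`-(1 + λη)/η`, so it solves to `log q = Q/κ + δ log μ - c` with `c = (1 + ν)η/(1 + λη)`.
Exponentiating, `μ^δ exp(Q/κ) = e^c q` a.e.; integrating against the normalisation `∫ q = 1`
gives `Z = e^c`, hence `q = μ^δ exp(Q/κ)/Z`, a formula that no longer mentions `ν`.
-/

open MeasureTheory

lemma log_eq_of_stationary {l η β Q M L ν : ℝ} (hη : η ≠ 0) (hlη : 1 + l * η ≠ 0)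
    (h : (1 / β) * Q - (1 / η) * L - L - 1 + (1 - l) * L + l * M - ν = 0) :
    L = Q / (β * (1 + l * η) / η) + l * η / (1 + l * η) * M - (1 + ν) * η / (1 + l * η) := by
  have hL : L * (1 + l * η) = (1 / β) * Q * η + l * η * M - (1 + ν) * η := by
    linear_combination (-η) * h - L * mul_inv_cancel₀ hη
  rw [eq_div_of_mul_eq hlη hL, div_div_eq_mul_div, ← div_div]
  ring

lemma rpow_mul_exp_eq_exp_mul_of_stationary {l η β Q m p ν : ℝ} (hη : η ≠ 0)
    (hlη : 1 + l * η ≠ 0) (hm : 0 < m) (hp : 0 < p)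
    (h : (1 / β) * Q - (1 / η) * Real.log p - Real.log p - 1 + (1 - l) * Real.log p
      + l * Real.log m - ν = 0) :
    m ^ (l * η / (1 + l * η)) * Real.exp (Q / (β * (1 + l * η) / η))
      = Real.exp ((1 + ν) * η / (1 + l * η)) * p := by
  rw [Real.rpow_def_of_pos hm, ← Real.exp_add, ← Real.exp_log hp, ← Real.exp_add,
    log_eq_of_stationary hη hlη h]
  congr 1
  ring

section Density

variable {α : Type*} [MeasurableSpace α] {ρ : Measure α} {f q : α → ℝ} {C : ℝ}

lemma integrable_of_ae_eq_const_mul (hq : ∫ a, q a ∂ρ = 1)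
    (hf : f =ᵐ[ρ] fun a => C * q a) : Integrable f ρ :=
  ((Integrable.of_integral_ne_zero (hq ▸ one_ne_zero)).const_mul C).congr hf.symm

lemma integral_eq_of_ae_eq_const_mul (hq : ∫ a, q a ∂ρ = 1)
    (hf : f =ᵐ[ρ] fun a => C * q a) : ∫ a, f a ∂ρ = C := by
  rw [integral_congr_ae hf, integral_const_mul, hq, mul_one]

lemma ae_eq_div_integral_of_ae_eq_const_mul (hq : ∫ a, q a ∂ρ = 1) (hC : C ≠ 0)
    (hf : f =ᵐ[ρ] fun a => C * q a) : q =ᵐ[ρ] fun a => f a / ∫ a, f a ∂ρ := by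
  rw [integral_eq_of_ae_eq_const_mul hq hf]
  filter_upwards [hf] with a ha
  rw [ha, mul_div_cancel_left₀ _ hC]

lemma tempered_ae_eq_exp_mul_of_stationary {l η β ν : ℝ} {Q μ : α → ℝ} (hη : η ≠ 0)
    (hlη : 1 + l * η ≠ 0) (hμ : ∀ᵐ a ∂ρ, 0 < μ a) (hq : ∀ᵐ a ∂ρ, 0 < q a)
    (hstat : ∀ᵐ a ∂ρ,
      (1 / β) * Q a - (1 / η) * Real.log (q a) - Real.log (q a) - 1
        + (1 - l) * Real.log (q a) + l * Real.log (μ a) - ν = 0) :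
    (fun a => μ a ^ (l * η / (1 + l * η)) * Real.exp (Q a / (β * (1 + l * η) / η)))
      =ᵐ[ρ] fun a => Real.exp ((1 + ν) * η / (1 + l * η)) * q a := by
  filter_upwards [hμ, hq, hstat] with a hμa hqa ha
  exact rpow_mul_exp_eq_exp_mul_of_stationary hη hlη hμa hqa ha

end Density

theorem optimal_stationary_policy_general
    {d : ℕ} (Ω : Set (EuclideanSpace ℝ (Fin d))) (hΩ : MeasurableSet Ω)
    (l η β : ℝ) (hl : l ∈ Set.Ioo (0 : ℝ) 1) (hη : 0 < η)
    (Q : EuclideanSpace ℝ (Fin d) → ℝ)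
    (μ : EuclideanSpace ℝ (Fin d) → ℝ)
    (hμpos : ∀ a ∈ Ω, 0 < μ a)
    (δ κ : ℝ) (hδ : δ = l * η / (1 + l * η)) (hκ : κ = β * (1 + l * η) / η)
    (q : EuclideanSpace ℝ (Fin d) → ℝ)
    (hq : IsProbDensity (volume.restrict Ω) q) (hqpos : ∀ a ∈ Ω, 0 < q a)
    (νc : ℝ)
    (hstat : ∀ᵐ a ∂(volume.restrict Ω),
      (1 / β) * Q a - (1 / η) * Real.log (q a) - Real.log (q a) - 1
        + (1 - l) * Real.log (q a) + l * Real.log (μ a) - νc = 0) :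
    Integrable (fun a => μ a ^ δ * Real.exp (Q a / κ)) (volume.restrict Ω) ∧
    0 < ∫ a, μ a ^ δ * Real.exp (Q a / κ) ∂(volume.restrict Ω) ∧
    (q =ᵐ[volume.restrict Ω] fun a =>
      μ a ^ δ * Real.exp (Q a / κ)
        / ∫ a, μ a ^ δ * Real.exp (Q a / κ) ∂(volume.restrict Ω)) ∧
    (∫ a, μ a ^ δ * Real.exp (Q a / κ) ∂(volume.restrict Ω))
      = Real.exp ((1 + νc) * η / (1 + l * η)) ∧
    ∀ (q' : EuclideanSpace ℝ (Fin d) → ℝ) (νc' : ℝ),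
      IsProbDensity (volume.restrict Ω) q' → (∀ a ∈ Ω, 0 < q' a) →
      (∀ᵐ a ∂(volume.restrict Ω),
        (1 / β) * Q a - (1 / η) * Real.log (q' a) - Real.log (q' a) - 1
          + (1 - l) * Real.log (q' a) + l * Real.log (μ a) - νc' = 0) →
      q' =ᵐ[volume.restrict Ω] q := by
  subst hδ hκ
  have hlη : 1 + l * η ≠ 0 := by nlinarith [hl.1]
  have hμ := ae_restrict_of_forall_mem (μ := volume) hΩ hμpos
  have hf := tempered_ae_eq_exp_mul_of_stationary hη.ne' hlη hμ
    (ae_restrict_of_forall_mem hΩ hqpos) hstat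
  have hZ := integral_eq_of_ae_eq_const_mul hq.2.2 hf
  refine ⟨integrable_of_ae_eq_const_mul hq.2.2 hf, hZ ▸ Real.exp_pos _,
    ae_eq_div_integral_of_ae_eq_const_mul hq.2.2 (Real.exp_ne_zero _) hf, hZ, ?_⟩
  intro q' νc' hq' hq'pos hstat'
  have hf' := tempered_ae_eq_exp_mul_of_stationary hη.ne' hlη hμ
    (ae_restrict_of_forall_mem hΩ hq'pos) hstat'
  exact (ae_eq_div_integral_of_ae_eq_const_mul hq'.2.2 (Real.exp_ne_zero _) hf').trans
    (ae_eq_div_integral_of_ae_eq_const_mul hq.2.2 (Real.exp_ne_zero _) hf).symm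

/-- **Optimal Stationary Policy of ME-AM.**
On a measurable `Ω ⊆ ℝ^d` with Lebesgue measure, let `λ ∈ (0,1)`, `η, β > 0`,
`δ = λη/(1+λη)`, `κ = β(1+λη)/η`. If the strictly positive probability density `q`
satisfies the stationarity (Euler–Lagrange) condition
`(1/β)Q − (1/η)log q − log q − 1 + (1−λ)log q + λ log μ − ν = 0` a.e. for some
Lagrange constant `ν`, then `Z = ∫ μ^δ exp(Q/κ)` is finite and positive,
`q = μ^δ exp(Q/κ)/Z` a.e., `Z = exp((1+ν)η/(1+λη))`, and any two strictly positive
probability densities satisfying such a condition coincide a.e. -/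
theorem optimal_stationary_policy
    {d : ℕ} (Ω : Set (EuclideanSpace ℝ (Fin d))) (hΩ : MeasurableSet Ω)
    (l η β : ℝ) (hl : l ∈ Set.Ioo (0 : ℝ) 1) (hη : 0 < η) (hβ : 0 < β)
    (Q : EuclideanSpace ℝ (Fin d) → ℝ) (hQm : Measurable Q)
    (μ : EuclideanSpace ℝ (Fin d) → ℝ)
    (hμ : IsProbDensity (volume.restrict Ω) μ) (hμpos : ∀ a ∈ Ω, 0 < μ a)
    (δ κ : ℝ) (hδ : δ = l * η / (1 + l * η)) (hκ : κ = β * (1 + l * η) / η)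
    (q : EuclideanSpace ℝ (Fin d) → ℝ)
    (hq : IsProbDensity (volume.restrict Ω) q) (hqpos : ∀ a ∈ Ω, 0 < q a)
    (νc : ℝ)
    (hstat : ∀ᵐ a ∂(volume.restrict Ω),
      (1 / β) * Q a - (1 / η) * Real.log (q a) - Real.log (q a) - 1
        + (1 - l) * Real.log (q a) + l * Real.log (μ a) - νc = 0) :
    Integrable (fun a => μ a ^ δ * Real.exp (Q a / κ)) (volume.restrict Ω) ∧
    0 < ∫ a, μ a ^ δ * Real.exp (Q a / κ) ∂(volume.restrict Ω) ∧
    (q =ᵐ[volume.restrict Ω] fun a =>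
      μ a ^ δ * Real.exp (Q a / κ)
        / ∫ a, μ a ^ δ * Real.exp (Q a / κ) ∂(volume.restrict Ω)) ∧
    (∫ a, μ a ^ δ * Real.exp (Q a / κ) ∂(volume.restrict Ω))
      = Real.exp ((1 + νc) * η / (1 + l * η)) ∧
    ∀ (q' : EuclideanSpace ℝ (Fin d) → ℝ) (νc' : ℝ),
      IsProbDensity (volume.restrict Ω) q' → (∀ a ∈ Ω, 0 < q' a) →
      (∀ᵐ a ∂(volume.restrict Ω),
        (1 / β) * Q a - (1 / η) * Real.log (q' a) - Real.log (q' a) - 1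
          + (1 - l) * Real.log (q' a) + l * Real.log (μ a) - νc' = 0) →
      q' =ᵐ[volume.restrict Ω] q :=
  optimal_stationary_policy_general Ω hΩ l η β hl hη Q μ hμpos δ κ hδ hκ q hq hqpos νc hstat
end

section
/- Let ν be a probability measure on ℝ^d, let σ > 0, and let φ_σ(x) = (2πσ²)^{−d/2}·exp(−‖x‖²/(2σ²)) be the centered Gaussian density on ℝ^d. Define the Gaussian-smoothed density p_σ(x) = ∫ φ_σ(x−y) dν(y). Then p_σ is strictly positive and differentiable on ℝ^d, the integral m_σ(x) = (∫ y·φ_σ(x−y) dν(y)) / p_σ(x) is well-defined (the numerator converges absolutely for every x), and for every x ∈ ℝ^d the score of the smoothed density satisfies ∇ log p_σ(x) = (m_σ(x) − x)/σ². -/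
/-!
Since `∇φ_σ(z) = -σ⁻² φ_σ(z) z` and `‖z‖ φ_σ(z)` is bounded (by `σ` times the normalising
constant), differentiation under the integral sign is justified for every finite `ν` and gives
`∇p_σ(x) = σ⁻² (∫ y φ_σ(x - y) dν(y) - p_σ(x) x)`. Dividing by `p_σ(x) > 0` yields the score.
The normalising constant of `φ_σ` cancels in the score, so the argument is run for the
unnormalised kernel `exp (-‖z‖² / (2σ²))`.
-/

open MeasureTheory InnerProductSpace

theorem Real.mul_exp_neg_sq_div_le {σ : ℝ} (hσ : 0 < σ) (t : ℝ) :
    t * Real.exp (-t ^ 2 / (2 * σ ^ 2)) ≤ σ := by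
  have h : t ≤ σ * Real.exp (t ^ 2 / (2 * σ ^ 2)) := calc
    t ≤ σ * (t ^ 2 / (2 * σ ^ 2) + 1) := by
      have : σ * (t ^ 2 / (2 * σ ^ 2) + 1) - t = ((t - σ) ^ 2 + σ ^ 2) / (2 * σ) := by
        field_simp; ring
      linarith [show 0 ≤ ((t - σ) ^ 2 + σ ^ 2) / (2 * σ) by positivity]
    _ ≤ σ * Real.exp (t ^ 2 / (2 * σ ^ 2)) := by gcongr; exact Real.add_one_le_exp _
  rwa [neg_div, Real.exp_neg, ← div_eq_mul_inv, div_le_iff₀ (Real.exp_pos _)]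

theorem HasGradientAt.log {E : Type*} [NormedAddCommGroup E] [InnerProductSpace ℝ E]
    [CompleteSpace E] {f : E → ℝ} {f' x : E} (hf : HasGradientAt f f' x) (hx : f x ≠ 0) :
    HasGradientAt (fun z => Real.log (f z)) ((f x)⁻¹ • f') x := by
  rw [hasGradientAt_iff_hasFDerivAt, map_smul]
  exact (Real.hasDerivAt_log hx).comp_hasFDerivAt x hf.hasFDerivAt

section Convolution

variable {E : Type*} [NormedAddCommGroup E] [InnerProductSpace ℝ E] [CompleteSpace E]
  [SecondCountableTopology E] [MeasurableSpace E] [OpensMeasurableSpace E]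
  {ν : Measure E} [IsFiniteMeasure ν]

theorem hasGradientAt_integral_comp_sub {K : E → ℝ} {K' : E → E} {C : ℝ} {x : E}
    (hK : Continuous K) (hK_int : Integrable (fun y => K (x - y)) ν)
    (hK' : ∀ z, HasGradientAt K (K' z) z) (hK'_cont : Continuous K') (hK'_le : ∀ z, ‖K' z‖ ≤ C) :
    HasGradientAt (fun x => ∫ y, K (x - y) ∂ν) (∫ y, K' (x - y) ∂ν) x := by
  rw [hasGradientAt_iff_hasFDerivAt, ← show ∫ y, toDual ℝ E (K' (x - y)) ∂ν =
    toDual ℝ E (∫ y, K' (x - y) ∂ν) from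
    (toDual ℝ E).toLinearIsometry.integral_comp_comm _]
  refine hasFDerivAt_integral_of_dominated_of_fderiv_le (F := fun x y => K (x - y))
    (F' := fun x y => toDual ℝ E (K' (x - y))) (bound := fun _ => C) Filter.univ_mem
    (.of_forall fun x' => (hK.comp (continuous_const.sub continuous_id)).aestronglyMeasurable)
    hK_int ?_ (ae_of_all _ fun y x' _ => ?_) (integrable_const C)
    (ae_of_all _ fun y x' _ => (hasFDerivAt_comp_sub y).2 (hK' _).hasFDerivAt)
  · exact ((toDual ℝ E).continuous.comp
      (hK'_cont.comp (continuous_const.sub continuous_id))).aestronglyMeasurable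
  · simpa using hK'_le (x' - y)

end Convolution

section Gaussian

variable {E : Type*} [NormedAddCommGroup E]

noncomputable def gaussianKernel (σ : ℝ) (x : E) : ℝ := Real.exp (-‖x‖ ^ 2 / (2 * σ ^ 2))

theorem gaussianKernel_pos (σ : ℝ) (x : E) : 0 < gaussianKernel σ x := Real.exp_pos _

theorem gaussianKernel_le_one (σ : ℝ) (x : E) : gaussianKernel σ x ≤ 1 :=
  Real.exp_le_one_iff.2 (div_nonpos_of_nonpos_of_nonneg (by simp) (by positivity))

@[fun_prop]
theorem continuous_gaussianKernel (σ : ℝ) : Continuous (gaussianKernel σ : E → ℝ) := by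
  unfold gaussianKernel; fun_prop

theorem norm_gaussianKernel_smul_le [NormedSpace ℝ E] {σ : ℝ} (hσ : 0 < σ) (x : E) :
    ‖gaussianKernel σ x • x‖ ≤ σ := by
  rw [norm_smul, Real.norm_of_nonneg (gaussianKernel_pos σ x).le, mul_comm]
  exact Real.mul_exp_neg_sq_div_le hσ ‖x‖

theorem hasGradientAt_gaussianKernel [InnerProductSpace ℝ E] [CompleteSpace E] (σ : ℝ) (x : E) :
    HasGradientAt (gaussianKernel σ) ((-(σ ^ 2)⁻¹ * gaussianKernel σ x) • x) x := by
  have hK : gaussianKernel σ = fun z : E => Real.exp (‖z‖ ^ 2 * -(2 * σ ^ 2)⁻¹) := by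
    funext z
    simp only [gaussianKernel]
    ring_nf
  rw [hasGradientAt_iff_hasFDerivAt, hK]
  refine ((hasFDerivAt_id x).norm_sq.mul_const _).exp.congr_fderiv ?_
  ext v
  simp only [toDual_apply_apply, ContinuousLinearMap.comp_id, smul_apply,
    coe_innerSL_apply, real_inner_smul_left, smul_eq_mul, nsmul_eq_mul, id_eq]
  ring

end Gaussian

section Smoothing

variable {E : Type*} [NormedAddCommGroup E] [MeasurableSpace E] [OpensMeasurableSpace E]
  {ν : Measure E} [IsFiniteMeasure ν] {σ : ℝ}

noncomputable def gaussianSmoothing (ν : Measure E) (σ : ℝ) (x : E) : ℝ :=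
  ∫ y, gaussianKernel σ (x - y) ∂ν

theorem integrable_gaussianKernel_comp_sub (σ : ℝ) (x : E) :
    Integrable (fun y => gaussianKernel σ (x - y)) ν :=
  .of_bound ((continuous_gaussianKernel σ).comp (by fun_prop)).aestronglyMeasurable 1
    (ae_of_all _ fun y => by
      simpa [abs_of_pos (gaussianKernel_pos σ (x - y))] using gaussianKernel_le_one σ (x - y))

theorem integrable_gaussianKernel_comp_sub_smul [NormedSpace ℝ E] [SecondCountableTopology E]
    (hσ : 0 < σ) (x : E) :
    Integrable (fun y => gaussianKernel σ (x - y) • y) ν := by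
  have hsub : Integrable (fun y => gaussianKernel σ (x - y) • (x - y)) ν :=
    .of_bound (by fun_prop) σ (ae_of_all _ fun y => norm_gaussianKernel_smul_le hσ (x - y))
  refine (((integrable_gaussianKernel_comp_sub σ x).smul_const x).sub hsub).congr
    (ae_of_all _ fun y => ?_)
  simp only [Pi.sub_apply, smul_sub, sub_sub_cancel]

theorem gaussianSmoothing_pos [NeZero ν] (σ : ℝ) (x : E) : 0 < gaussianSmoothing ν σ x :=
  integral_exp_pos (integrable_gaussianKernel_comp_sub σ x)

theorem hasGradientAt_gaussianSmoothing [InnerProductSpace ℝ E] [CompleteSpace E]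
    [SecondCountableTopology E] (hσ : 0 < σ) (x : E) :
    HasGradientAt (gaussianSmoothing ν σ)
      ((σ ^ 2)⁻¹ • (∫ y, gaussianKernel σ (x - y) • y ∂ν - gaussianSmoothing ν σ x • x)) x := by
  have hgrad := hasGradientAt_integral_comp_sub (ν := ν) (continuous_gaussianKernel σ)
    (integrable_gaussianKernel_comp_sub σ x) (hasGradientAt_gaussianKernel σ) (by fun_prop)
    (C := (σ ^ 2)⁻¹ * σ) fun z => ?_
  · have hintegrand : ∀ y, (-(σ ^ 2)⁻¹ * gaussianKernel σ (x - y)) • (x - y) =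
        (σ ^ 2)⁻¹ • (gaussianKernel σ (x - y) • y - gaussianKernel σ (x - y) • x) :=
      fun y => by module
    simp_rw [hintegrand] at hgrad
    rwa [integral_smul, integral_sub (integrable_gaussianKernel_comp_sub_smul hσ x)
      ((integrable_gaussianKernel_comp_sub σ x).smul_const x), integral_smul_const] at hgrad
  · rw [mul_smul, norm_smul, norm_neg, Real.norm_of_nonneg (by positivity)]
    exact mul_le_mul_of_nonneg_left (norm_gaussianKernel_smul_le hσ z) (by positivity)

theorem hasGradientAt_log_gaussianSmoothing [InnerProductSpace ℝ E] [CompleteSpace E]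
    [SecondCountableTopology E] [NeZero ν] (hσ : 0 < σ) (x : E) :
    HasGradientAt (fun z => Real.log (gaussianSmoothing ν σ z))
      ((σ ^ 2)⁻¹ • ((gaussianSmoothing ν σ x)⁻¹ • ∫ y, gaussianKernel σ (x - y) • y ∂ν - x)) x := by
  have hp := (gaussianSmoothing_pos (ν := ν) σ x).ne'
  convert (hasGradientAt_gaussianSmoothing hσ x).log hp using 1
  rw [smul_comm, smul_sub (gaussianSmoothing ν σ x)⁻¹, inv_smul_smul₀ hp]

end Smoothing

/-- **Tweedie's formula / denoising score identity.**
For a probability measure `ν` on `ℝ^d` and `σ > 0`, the Gaussian-smoothed density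
`p_σ(x) = ∫ φ_σ(x−y) dν(y)` is strictly positive and differentiable, the posterior
mean `m_σ(x) = (∫ y·φ_σ(x−y) dν(y))/p_σ(x)` is well-defined (the numerator converges
absolutely for every `x`), and the score satisfies
`∇ log p_σ(x) = (m_σ(x) − x)/σ²`. -/
theorem tweedie_smoothed_score
    {d : ℕ} (ν : Measure (EuclideanSpace ℝ (Fin d))) [IsProbabilityMeasure ν]
    (σ : ℝ) (hσ : 0 < σ)
    (φσ : EuclideanSpace ℝ (Fin d) → ℝ)
    (hφσ : ∀ x, φσ x = (2 * Real.pi * σ ^ 2) ^ (-(d : ℝ) / 2)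
        * Real.exp (-‖x‖ ^ 2 / (2 * σ ^ 2)))
    (pσ : EuclideanSpace ℝ (Fin d) → ℝ)
    (hpσ : ∀ x, pσ x = ∫ y, φσ (x - y) ∂ν)
    (mσ : EuclideanSpace ℝ (Fin d) → EuclideanSpace ℝ (Fin d))
    (hmσ : ∀ x, mσ x = (pσ x)⁻¹ • ∫ y, φσ (x - y) • y ∂ν) :
    (∀ x, 0 < pσ x) ∧
    Differentiable ℝ pσ ∧
    (∀ x, Integrable (fun y => φσ (x - y) • y) ν) ∧
    (∀ x, gradient (fun z => Real.log (pσ z)) x = (σ ^ 2)⁻¹ • (mσ x - x)) := by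
  set c : ℝ := (2 * Real.pi * σ ^ 2) ^ (-(d : ℝ) / 2)
  have hc : 0 < c := Real.rpow_pos_of_pos (by positivity) _
  have hφ : ∀ x, φσ x = c * gaussianKernel σ x := hφσ
  have hp : ∀ x, pσ x = c * gaussianSmoothing ν σ x := fun x => by
    simp only [hpσ, hφ, gaussianSmoothing, integral_const_mul]
  have hnum : ∀ x, ∫ y, φσ (x - y) • y ∂ν = c • ∫ y, gaussianKernel σ (x - y) • y ∂ν :=
    fun x => by simp only [hφ, mul_smul, integral_smul]
  have hm : ∀ x, mσ x = (gaussianSmoothing ν σ x)⁻¹ • ∫ y, gaussianKernel σ (x - y) • y ∂ν :=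
    fun x => by rw [hmσ, hp, hnum, smul_smul, mul_inv_rev, inv_mul_cancel_right₀ hc.ne']
  have hlog : (fun z => Real.log (pσ z)) =
      fun z => Real.log c + Real.log (gaussianSmoothing ν σ z) := by
    funext z
    rw [hp, Real.log_mul hc.ne' (gaussianSmoothing_pos σ z).ne']
  refine ⟨fun x => hp x ▸ mul_pos hc (gaussianSmoothing_pos σ x), ?_, fun x => ?_, fun x => ?_⟩
  · rw [funext hp]
    exact fun x => (hasGradientAt_gaussianSmoothing hσ x).differentiableAt.const_mul c
  · simp only [hφ, mul_smul]
    exact (integrable_gaussianKernel_comp_sub_smul hσ x).smul c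
  · have hscore : HasGradientAt (fun z => Real.log c + Real.log (gaussianSmoothing ν σ z))
        ((σ ^ 2)⁻¹ • (mσ x - x)) x :=
      hm x ▸ (hasGradientAt_log_gaussianSmoothing hσ x).hasFDerivAt.const_add _
    rw [hlog, hscore.gradient]
end
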